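/- Let α > 2 and let f : (−1,1) → [0,∞) be measurable with all integrals below finite. Then ∫_{−1}^1 H(w)^{α/(α+1)} f(w) dw ≤ (c_α d_α + d_α^{−2}) · (∫_{−1}^1 w² H(w)^α f(w)^{α+1} dw)^{2/(3α)} · (∫_{−1}^1 w² H(w)^{α/(α+1)} f(w) dw)^{(α−2)/(3α)}, where c_α = (2α/(α−2))^{α/(α+1)} and d_α = (2(α+1)/(c_α(α−2)))^{1/3}. -/

import Mathlib

open MeasureTheory Set

/-!
Write `F = (1 - w²)^(α/(α+1)) f`, so that the three integrals are `∫ F`, `B = ∫ w² F^(α+1)` and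
`C = ∫ w² F`, and split `(-1, 1)` at `|w| = ε`. Away from the origin `1 ≤ w² / ε²`, so that part
is at most `C / ε²`. Near the origin, Hölder with exponents `α + 1` and `(α + 1) / α` against the
weight `w²` bounds it by `c_α ε^((α-2)/(α+1)) B^(1/(α+1))`, because
`∫_{-ε}^{ε} |w|^(-2/α) = 2α/(α-2) · ε^((α-2)/α)`. The choice `ε = d_α C^((α+1)/(3α)) B^(-1/(3α))`
makes both terms proportional to `B^(2/(3α)) C^((α-2)/(3α))`, and `d_α^((α-2)/(α+1)) ≤ d_α`
since `d_α ≥ 1`. If `B = 0` or `C = 0`, letting `ε → ∞` or `ε → 0` gives `∫ F ≤ 0`.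
-/

theorem intervalIntegrable_abs_rpow {r : ℝ} (hr : -1 < r) (a b : ℝ) :
    IntervalIntegrable (fun x => |x| ^ r) volume a b := by
  suffices h : ∀ c, IntervalIntegrable (fun x => |x| ^ r) volume 0 c from (h a).symm.trans (h b)
  have hpos : ∀ c, 0 ≤ c → IntervalIntegrable (fun x => |x| ^ r) volume 0 c := fun c hc =>
    (intervalIntegral.intervalIntegrable_rpow' hr).congr fun x hx => by
      rw [uIoc_of_le hc] at hx
      simp [abs_of_pos hx.1]
  intro c
  rcases le_total 0 c with hc | hc
  · exact hpos c hc
  · rw [IntervalIntegrable.iff_comp_neg, neg_zero]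
    simpa only [abs_neg] using hpos (-c) (by linarith)

theorem integral_abs_rpow_neg_self {r : ℝ} (hr : -1 < r) {m : ℝ} (hm : 0 ≤ m) :
    ∫ x in -m..m, |x| ^ r = 2 * m ^ (r + 1) / (r + 1) := by
  have hright : ∫ x in (0:ℝ)..m, |x| ^ r = m ^ (r + 1) / (r + 1) := by
    rw [intervalIntegral.integral_congr (g := fun x => x ^ r) fun x hx => ?_,
      integral_rpow (Or.inl hr), Real.zero_rpow (by linarith)]
    · ring
    · rw [uIcc_of_le hm] at hx
      simp [abs_of_nonneg hx.1]
  have hleft : ∫ x in -m..0, |x| ^ r = ∫ x in (0:ℝ)..m, |x| ^ r := by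
    simpa only [abs_neg, neg_zero] using
      (intervalIntegral.integral_comp_neg (a := 0) (b := m) fun x => |x| ^ r).symm
  rw [← intervalIntegral.integral_add_adjacent_intervals (b := 0)
    (intervalIntegrable_abs_rpow hr _ _) (intervalIntegrable_abs_rpow hr _ _), hleft, hright]
  ring

section Holder

variable {X : Type*} [MeasurableSpace X] {μ : Measure X}

theorem memLp_ofReal_of_integrable_rpow {p : ℝ} (hp : 0 < p) {f : X → ℝ} (hf0 : 0 ≤ᵐ[μ] f)
    (hf : AEStronglyMeasurable f μ) (hfp : Integrable (fun x => f x ^ p) μ) :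
    MemLp f (ENNReal.ofReal p) μ := by
  refine (integrable_norm_rpow_iff hf (by simpa using hp) ENNReal.ofReal_ne_top).1 ?_
  rw [ENNReal.toReal_ofReal hp.le]
  refine hfp.congr ?_
  filter_upwards [hf0] with x hx
  rw [Real.norm_of_nonneg hx]

theorem integral_le_weighted_Lp_mul_Lq {p q : ℝ} (hpq : p.HolderConjugate q) {F ω : X → ℝ}
    (hF0 : 0 ≤ᵐ[μ] F) (hω : ∀ᵐ x ∂μ, 0 < ω x) (hFm : AEMeasurable F μ) (hωm : AEMeasurable ω μ)
    (hint : Integrable (fun x => ω x * F x ^ p) μ)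
    (hdual : Integrable (fun x => ω x ^ (-(q / p))) μ) :
    ∫ x, F x ∂μ ≤
      (∫ x, ω x * F x ^ p ∂μ) ^ (1 / p) * (∫ x, ω x ^ (-(q / p)) ∂μ) ^ (1 / q) := by
  have hp := hpq.pos
  set f := fun x => ω x ^ (1 / p) * F x
  set g := fun x => ω x ^ (-(1 / p))
  have hf0 : 0 ≤ᵐ[μ] f := by
    filter_upwards [hF0, hω] with x hFx hωx
    exact mul_nonneg (Real.rpow_nonneg hωx.le _) hFx
  have hg0 : 0 ≤ᵐ[μ] g := by
    filter_upwards [hω] with x hωx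
    exact Real.rpow_nonneg hωx.le _
  have hfg : (fun x => f x * g x) =ᵐ[μ] F := by
    filter_upwards [hω] with x hωx
    simp only [f, g, mul_right_comm _ (F x), ← Real.rpow_add hωx, add_neg_cancel,
      Real.rpow_zero, one_mul]
  have hfp : (fun x => f x ^ p) =ᵐ[μ] fun x => ω x * F x ^ p := by
    filter_upwards [hF0, hω] with x hFx hωx
    rw [Real.mul_rpow (Real.rpow_nonneg hωx.le _) hFx, ← Real.rpow_mul hωx.le,
      one_div_mul_cancel hp.ne', Real.rpow_one]
  have hgq : (fun x => g x ^ q) =ᵐ[μ] fun x => ω x ^ (-(q / p)) := by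
    filter_upwards [hω] with x hωx
    rw [← Real.rpow_mul hωx.le]
    ring_nf
  have hholder := integral_mul_le_Lp_mul_Lq_of_nonneg hpq hf0 hg0
    (memLp_ofReal_of_integrable_rpow hp hf0
      ((hωm.pow_const _).mul hFm).aestronglyMeasurable (hint.congr hfp.symm))
    (memLp_ofReal_of_integrable_rpow hpq.symm.pos hg0
      (hωm.pow_const _).aestronglyMeasurable (hdual.congr hgq.symm))
  rwa [integral_congr_ae hfg, integral_congr_ae hfp, integral_congr_ae hgq] at hholder

end Holder

theorem setIntegral_inter_Icc_le {α : ℝ} (hα : 2 < α) {s : Set ℝ} (hs : MeasurableSet s)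
    {F : ℝ → ℝ} (hF0 : ∀ x ∈ s, 0 ≤ F x) (hFm : Measurable F)
    (hFα : IntegrableOn (fun x => x ^ 2 * F x ^ (α + 1)) s) {ε : ℝ} (hε : 0 < ε) :
    ∫ x in s ∩ Icc (-ε) ε, F x ≤ (2 * α / (α - 2)) ^ (α / (α + 1)) * ε ^ ((α - 2) / (α + 1))
      * (∫ x in s, x ^ 2 * F x ^ (α + 1)) ^ (1 / (α + 1)) := by
  have hα0 : 0 < α := by linarith
  have hsub : s ∩ Icc (-ε) ε ⊆ s := inter_subset_left
  have hmeas : MeasurableSet (s ∩ Icc (-ε) ε) := hs.inter measurableSet_Icc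
  have hr : -1 < -(2 / α) := by rw [neg_lt_neg_iff, div_lt_one hα0]; linarith
  have hpq : (α + 1).HolderConjugate ((α + 1) / α) :=
    Real.holderConjugate_iff.2 ⟨by linarith, by field_simp; ring⟩
  have hqp : (α + 1) / α / (α + 1) = 1 / α := by field_simp
  have hweight : ∀ x : ℝ, (x ^ 2) ^ (-(1 / α)) = |x| ^ (-(2 / α)) := fun x => by
    rw [← sq_abs, ← Real.rpow_natCast, ← Real.rpow_mul (abs_nonneg x)]
    ring_nf
  have hdualIcc : IntegrableOn (fun x : ℝ => (x ^ 2) ^ (-(1 / α))) (Icc (-ε) ε) := by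
    simp only [hweight]
    exact (intervalIntegrable_iff_integrableOn_Icc_of_le (by linarith)).1
      (intervalIntegrable_abs_rpow hr _ _)
  have hholder := integral_le_weighted_Lp_mul_Lq (μ := volume.restrict (s ∩ Icc (-ε) ε)) hpq
    (F := F) (ω := fun x => x ^ 2)
    ((ae_restrict_iff' hmeas).2 (ae_of_all _ fun x hx => hF0 x hx.1))
    (ae_restrict_of_ae (by simp [ae_iff, measure_singleton])) hFm.aemeasurable
    (by fun_prop) (hFα.mono_set hsub) (by rw [hqp]; exact hdualIcc.mono_set inter_subset_right)
  have hdual : ∫ x in s ∩ Icc (-ε) ε, (x ^ 2) ^ (-(1 / α))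
      ≤ (2 * α / (α - 2)) * ε ^ ((α - 2) / α) := by
    calc ∫ x in s ∩ Icc (-ε) ε, (x ^ 2) ^ (-(1 / α))
        ≤ ∫ x in Icc (-ε) ε, (x ^ 2) ^ (-(1 / α)) :=
          setIntegral_mono_set hdualIcc (ae_of_all _ fun x => Real.rpow_nonneg (sq_nonneg x) _)
            inter_subset_right.eventuallyLE
      _ = 2 * ε ^ (-(2 / α) + 1) / (-(2 / α) + 1) := by
          simp only [hweight]
          rw [integral_Icc_eq_integral_Ioc, ← intervalIntegral.integral_of_le (by linarith),
            integral_abs_rpow_neg_self hr hε.le]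
      _ = (2 * α / (α - 2)) * ε ^ ((α - 2) / α) := by
          rw [show -(2 / α) + 1 = (α - 2) / α by field_simp; ring]
          field_simp
  have hGnonneg : ∀ x ∈ s, 0 ≤ x ^ 2 * F x ^ (α + 1) := fun x hx => by
    have := hF0 x hx
    positivity
  have hmain : ∫ x in s ∩ Icc (-ε) ε, x ^ 2 * F x ^ (α + 1) ≤ ∫ x in s, x ^ 2 * F x ^ (α + 1) :=
    setIntegral_mono_set hFα ((ae_restrict_iff' hs).2 (ae_of_all _ hGnonneg)) hsub.eventuallyLE
  rw [hqp, one_div_div] at hholder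
  refine hholder.trans ?_
  calc _ ≤ (∫ x in s, x ^ 2 * F x ^ (α + 1)) ^ (1 / (α + 1))
        * ((2 * α / (α - 2)) * ε ^ ((α - 2) / α)) ^ (α / (α + 1)) := by
        gcongr
        · exact Real.rpow_nonneg (setIntegral_nonneg hs fun x hx => hGnonneg x hx) _
        · exact setIntegral_nonneg hmeas fun x hx => hGnonneg x hx.1
    _ = _ := by
        rw [Real.mul_rpow (by positivity) (by positivity), ← Real.rpow_mul hε.le,
          show (α - 2) / α * (α / (α + 1)) = (α - 2) / (α + 1) by field_simp]
        ring

theorem setIntegral_diff_Icc_le {s : Set ℝ} (hs : MeasurableSet s) {F : ℝ → ℝ}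
    (hF0 : ∀ x ∈ s, 0 ≤ F x) (hF2 : IntegrableOn (fun x => x ^ 2 * F x) s) {ε : ℝ} (hε : 0 < ε) :
    ∫ x in s \ Icc (-ε) ε, F x ≤ (∫ x in s, x ^ 2 * F x) / ε ^ 2 := by
  have hmeas : MeasurableSet (s \ Icc (-ε) ε) := hs.diff measurableSet_Icc
  have hG0 : ∀ x ∈ s, 0 ≤ x ^ 2 * F x := fun x hx => mul_nonneg (sq_nonneg x) (hF0 x hx)
  have hpointwise : ∀ x ∈ s \ Icc (-ε) ε, F x ≤ x ^ 2 * F x / ε ^ 2 := by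
    rintro x ⟨hxs, hxε⟩
    have hεx : ε ^ 2 ≤ x ^ 2 := by
      rw [mem_Icc, ← abs_le, not_le] at hxε
      nlinarith [sq_abs x, abs_nonneg x]
    rw [le_div_iff₀ (by positivity)]
    exact mul_le_mul_of_nonneg_left hεx (hF0 x hxs) |>.trans_eq (mul_comm _ _)
  calc ∫ x in s \ Icc (-ε) ε, F x
      ≤ ∫ x in s \ Icc (-ε) ε, x ^ 2 * F x / ε ^ 2 :=
        integral_mono_of_nonneg ((ae_restrict_iff' hmeas).2 (ae_of_all _ fun x hx => hF0 x hx.1))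
          ((hF2.mono_set sdiff_subset).div_const _)
          ((ae_restrict_iff' hmeas).2 (ae_of_all _ hpointwise))
    _ = (∫ x in s \ Icc (-ε) ε, x ^ 2 * F x) / ε ^ 2 := integral_div _ _
    _ ≤ (∫ x in s, x ^ 2 * F x) / ε ^ 2 := by
        refine div_le_div_of_nonneg_right ?_ (sq_nonneg ε)
        exact setIntegral_mono_set hF2 ((ae_restrict_iff' hs).2 (ae_of_all _ hG0))
          sdiff_subset.eventuallyLE

theorem setIntegral_le_split {α : ℝ} (hα : 2 < α) {s : Set ℝ} (hs : MeasurableSet s)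
    {F : ℝ → ℝ} (hF0 : ∀ x ∈ s, 0 ≤ F x) (hFm : Measurable F) (hF : IntegrableOn F s)
    (hF2 : IntegrableOn (fun x => x ^ 2 * F x) s)
    (hFα : IntegrableOn (fun x => x ^ 2 * F x ^ (α + 1)) s) {ε : ℝ} (hε : 0 < ε) :
    ∫ x in s, F x ≤ (2 * α / (α - 2)) ^ (α / (α + 1)) * ε ^ ((α - 2) / (α + 1))
      * (∫ x in s, x ^ 2 * F x ^ (α + 1)) ^ (1 / (α + 1)) + (∫ x in s, x ^ 2 * F x) / ε ^ 2 := by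
  rw [← integral_inter_add_sdiff measurableSet_Icc hF]
  exact add_le_add (setIntegral_inter_Icc_le hα hs hF0 hFm hFα hε)
    (setIntegral_diff_Icc_le hs hF0 hF2 hε)

theorem nonpos_of_forall_le_mul_rpow {A K s : ℝ} (hK : 0 ≤ K) (hs : s ≠ 0)
    (h : ∀ ε > 0, A ≤ K * ε ^ s) : A ≤ 0 := by
  by_contra! hA
  have hδ : 0 < A / (K + 1) := by positivity
  have hε := h _ (Real.rpow_pos_of_pos hδ s⁻¹)
  rw [Real.rpow_inv_rpow hδ.le hs, mul_div_assoc', le_div_iff₀ (by positivity)] at hε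
  nlinarith

theorem rpow_balance_left {α B C : ℝ} (hα : 0 < α) (hB : 0 < B) (hC : 0 < C) :
    (C ^ ((α + 1) / (3 * α)) * B ^ (-(1 / (3 * α)))) ^ ((α - 2) / (α + 1)) * B ^ (1 / (α + 1))
      = B ^ (2 / (3 * α)) * C ^ ((α - 2) / (3 * α)) := by
  rw [Real.mul_rpow (by positivity) (by positivity), ← Real.rpow_mul hC.le,
    ← Real.rpow_mul hB.le, mul_assoc, ← Real.rpow_add hB, mul_comm]
  congr 2 <;> field_simp
  ring

theorem rpow_balance_right {α B C : ℝ} (hα : 0 < α) (hB : 0 < B) (hC : 0 < C) :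
    C / (C ^ ((α + 1) / (3 * α)) * B ^ (-(1 / (3 * α)))) ^ 2
      = B ^ (2 / (3 * α)) * C ^ ((α - 2) / (3 * α)) := by
  rw [div_eq_iff (by positivity), ← Real.rpow_two, Real.mul_rpow (by positivity) (by positivity),
    ← Real.rpow_mul hC.le, ← Real.rpow_mul hB.le]
  calc C = B ^ (2 / (3 * α) + -(1 / (3 * α)) * 2)
        * C ^ ((α - 2) / (3 * α) + (α + 1) / (3 * α) * 2) := by
        rw [show 2 / (3 * α) + -(1 / (3 * α)) * 2 = 0 by ring,
          show (α - 2) / (3 * α) + (α + 1) / (3 * α) * 2 = 1 by field_simp; ring,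
          Real.rpow_zero, Real.rpow_one, one_mul]
    _ = _ := by rw [Real.rpow_add hB, Real.rpow_add hC]; ring

theorem le_of_forall_le_split {α c d A B C : ℝ} (hα : 2 < α) (hc : 0 ≤ c) (hd : 1 ≤ d)
    (hB : 0 ≤ B) (hC : 0 ≤ C)
    (h : ∀ ε > 0, A ≤ c * ε ^ ((α - 2) / (α + 1)) * B ^ (1 / (α + 1)) + C / ε ^ 2) :
    A ≤ (c * d + d⁻¹ ^ 2) * B ^ (2 / (3 * α)) * C ^ ((α - 2) / (3 * α)) := by
  have hα0 : 0 < α := by linarith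
  have hα2 : 0 < α - 2 := by linarith
  rcases hB.eq_or_lt with rfl | hB
  · rw [Real.zero_rpow (by positivity), mul_zero, zero_mul]
    refine nonpos_of_forall_le_mul_rpow hC (by norm_num : (-2 : ℝ) ≠ 0) fun ε hε => ?_
    rw [Real.rpow_neg hε.le, Real.rpow_two, ← div_eq_mul_inv]
    simpa only [Real.zero_rpow (by positivity : 1 / (α + 1) ≠ 0), mul_zero, zero_add] using h ε hε
  rcases hC.eq_or_lt with rfl | hC
  · rw [Real.zero_rpow (by positivity), mul_zero]
    refine nonpos_of_forall_le_mul_rpow (K := c * B ^ (1 / (α + 1))) (s := (α - 2) / (α + 1))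
      (by positivity) (by positivity) fun ε hε => ?_
    have := h ε hε
    rwa [zero_div, add_zero, mul_right_comm] at this
  set X := C ^ ((α + 1) / (3 * α)) * B ^ (-(1 / (3 * α)))
  have hX : 0 < X := by positivity
  have hdθ : d ^ ((α - 2) / (α + 1)) ≤ d := by
    conv_rhs => rw [← Real.rpow_one d]
    exact Real.rpow_le_rpow_of_exponent_le hd (by rw [div_le_one (by linarith)]; linarith)
  calc A ≤ c * (d * X) ^ ((α - 2) / (α + 1)) * B ^ (1 / (α + 1)) + C / (d * X) ^ 2 :=
        h _ (by positivity)
    _ = c * d ^ ((α - 2) / (α + 1)) * (X ^ ((α - 2) / (α + 1)) * B ^ (1 / (α + 1)))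
        + d⁻¹ ^ 2 * (C / X ^ 2) := by
        rw [Real.mul_rpow (by positivity) hX.le, mul_pow]
        field_simp
    _ ≤ (c * d + d⁻¹ ^ 2) * B ^ (2 / (3 * α)) * C ^ ((α - 2) / (3 * α)) := by
        rw [rpow_balance_left hα0 hB hC, rpow_balance_right hα0 hB hC]
        have hM : 0 < B ^ (2 / (3 * α)) * C ^ ((α - 2) / (3 * α)) := by positivity
        nlinarith [mul_le_mul_of_nonneg_left hdθ hc]

theorem rpow_mul_sub_two_le {α : ℝ} (hα : 2 < α) :
    (2 * α / (α - 2)) ^ (α / (α + 1)) * (α - 2) ≤ 2 * (α + 1) := by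
  have hα2 : 0 < α - 2 := by linarith
  have hα1 : 0 < α + 1 := by linarith
  have hsplit : (2 * α / (α - 2)) ^ (α / (α + 1)) * (α - 2)
      = (2 * α) ^ (α / (α + 1)) * (α - 2) ^ (1 / (α + 1)) := by
    rw [Real.div_rpow (by positivity) hα2.le, div_mul_eq_mul_div, mul_div_assoc,
      show 1 / (α + 1) = 1 - α / (α + 1) by field_simp; ring, Real.rpow_sub hα2, Real.rpow_one]
  rw [hsplit]
  -- weighted AM-GM with weights `α / (α + 1)` and `1 / (α + 1)`
  refine (Real.geom_mean_le_arith_mean2_weighted (by positivity) (by positivity) (by positivity)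
    hα2.le (by field_simp)).trans ?_
  rw [div_mul_eq_mul_div, div_mul_eq_mul_div, ← add_div, div_le_iff₀ hα1]
  nlinarith

/-- Inequality (eq:inRop) of the paper: optimized interpolation bound for
`∫ H^(α/(α+1)) f dw`, where `H(w) = 1 - w²`, `c_α = (2α/(α-2))^(α/(α+1))` and
`d_α = (2(α+1)/(c_α(α-2)))^(1/3)`. -/
theorem optimized_interpolation_bound_alpha
    (α : ℝ) (f : ℝ → ℝ) (c d : ℝ)
    (hα : 2 < α)
    (hc : c = (2 * α / (α - 2)) ^ (α / (α + 1)))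
    (hd : d = (2 * (α + 1) / (c * (α - 2))) ^ ((1:ℝ) / 3))
    (hfnonneg : ∀ w, 0 ≤ f w)
    (hfmeas : Measurable f)
    (hf1 : IntegrableOn (fun w => (1 - w ^ 2) ^ (α / (α + 1)) * f w) (Ioo (-1:ℝ) 1))
    (hf2 : IntegrableOn (fun w => w ^ 2 * (1 - w ^ 2) ^ (α / (α + 1)) * f w) (Ioo (-1:ℝ) 1))
    (hfα : IntegrableOn (fun w => w ^ 2 * (1 - w ^ 2) ^ α * f w ^ (α + 1)) (Ioo (-1:ℝ) 1)) :
    ∫ w in Ioo (-1:ℝ) 1, (1 - w ^ 2) ^ (α / (α + 1)) * f w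
      ≤ (c * d + d⁻¹ ^ 2)
        * (∫ w in Ioo (-1:ℝ) 1, w ^ 2 * (1 - w ^ 2) ^ α * f w ^ (α + 1)) ^ (2 / (3 * α))
        * (∫ w in Ioo (-1:ℝ) 1, w ^ 2 * (1 - w ^ 2) ^ (α / (α + 1)) * f w)
            ^ ((α - 2) / (3 * α)) := by
  have hα2 : 0 < α - 2 := by linarith
  have hc0 : 0 < c := hc ▸ by positivity
  have hd1 : 1 ≤ d := hd ▸ Real.one_le_rpow
    ((one_le_div (by positivity)).2 (hc ▸ rpow_mul_sub_two_le hα)) (by norm_num)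
  have hH : ∀ w ∈ Ioo (-1:ℝ) 1, 0 ≤ 1 - w ^ 2 := fun w hw => by nlinarith [hw.1, hw.2]
  have hF0 : ∀ w ∈ Ioo (-1:ℝ) 1, 0 ≤ (1 - w ^ 2) ^ (α / (α + 1)) * f w := fun w hw =>
    mul_nonneg (Real.rpow_nonneg (hH w hw) _) (hfnonneg w)
  have hpow : EqOn (fun w => w ^ 2 * (1 - w ^ 2) ^ α * f w ^ (α + 1))
      (fun w => w ^ 2 * ((1 - w ^ 2) ^ (α / (α + 1)) * f w) ^ (α + 1)) (Ioo (-1) 1) :=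
    fun w hw => by
      dsimp only
      rw [Real.mul_rpow (Real.rpow_nonneg (hH w hw) _) (hfnonneg w), ← Real.rpow_mul (hH w hw),
        div_mul_cancel₀ _ (by positivity), mul_assoc]
  have hf2' : IntegrableOn (fun w => w ^ 2 * ((1 - w ^ 2) ^ (α / (α + 1)) * f w))
      (Ioo (-1) 1) := by
    simpa only [mul_assoc] using hf2
  refine le_of_forall_le_split hα hc0.le hd1
    (setIntegral_nonneg measurableSet_Ioo fun w hw =>
      mul_nonneg (mul_nonneg (sq_nonneg w) (Real.rpow_nonneg (hH w hw) _))
        (Real.rpow_nonneg (hfnonneg w) _))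
    (setIntegral_nonneg measurableSet_Ioo fun w hw =>
      mul_assoc (w ^ 2) _ (f w) ▸ mul_nonneg (sq_nonneg w) (hF0 w hw)) fun ε hε => ?_
  rw [setIntegral_congr_fun measurableSet_Ioo hpow, hc]
  simpa only [mul_assoc] using setIntegral_le_split hα measurableSet_Ioo hF0 (by fun_prop) hf1
    hf2' (hfα.congr_fun hpow measurableSet_Ioo) hε
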